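/- Let α be a real number with 0 < α < 2. Then lim_{φ → 0⁺} φ^{1+α} · ∫₀^∞ r · (1 + r² - 2r·cos φ)^{-(1+α/2)} dr = √π · Γ((1+α)/2) / Γ(1+α/2), where Γ denotes the Gamma function. -/

import Mathlib

open MeasureTheory Real Set Filter Topology

/-! Completing the square, `1 + r² - 2r cos φ = (r - cos φ)² + sin² φ`, and substituting
`r = cos φ + t sin φ` turn the integral into
`sin φ ^ (-(1+α)) (sin φ ∫_{-cot φ}^∞ t (1+t²)^(-p) dt + cos φ ∫_{-cot φ}^∞ (1+t²)^(-p) dt)`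
with `p = 1 + α/2`. As `φ → 0⁺` we have `-cot φ → -∞` and `φ / sin φ → 1`, so the limit is
`∫_ℝ (1+t²)^(-p) dt`, which Fubini applied to `u^(p-1) e^{-(1+t²)u}` evaluates as
`√π Γ(p - 1/2) / Γ(p)`, the Gaussian integral in `t` producing the `√π`. -/

lemma integrable_one_add_sq_rpow_neg {p : ℝ} (hp : 1 / 2 < p) :
    Integrable fun t : ℝ => (1 + t ^ 2) ^ (-p) := by
  simpa [norm_eq_abs, sq_abs, neg_div, mul_div_assoc] using
    integrable_rpow_neg_one_add_norm_sq (E := ℝ) (μ := volume) (r := 2 * p) (by simp; linarith)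

lemma integrable_mul_one_add_sq_rpow_neg {p : ℝ} (hp : 1 < p) :
    Integrable fun t : ℝ => t * (1 + t ^ 2) ^ (-p) := by
  refine (integrable_one_add_sq_rpow_neg (p := p - 1 / 2) (by linarith)).mono'
    (by fun_prop) (ae_of_all _ fun t => ?_)
  have hpos : (0 : ℝ) < 1 + t ^ 2 := by positivity
  have habs : |t| ≤ (1 + t ^ 2) ^ (1 / 2 : ℝ) := by
    rw [← sqrt_eq_rpow, ← sqrt_sq_eq_abs]
    exact sqrt_le_sqrt (by linarith)
  calc ‖t * (1 + t ^ 2) ^ (-p)‖ = |t| * (1 + t ^ 2) ^ (-p) := by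
        rw [norm_mul, norm_eq_abs, norm_of_nonneg (by positivity)]
    _ ≤ (1 + t ^ 2) ^ (1 / 2 : ℝ) * (1 + t ^ 2) ^ (-p) := by gcongr
    _ = (1 + t ^ 2) ^ (-(p - 1 / 2)) := by rw [← rpow_add hpos]; ring_nf

lemma integral_rpow_mul_exp_neg_one_add_sq_mul_Ioi {p : ℝ} (hp : 0 < p) (t : ℝ) :
    ∫ u in Ioi (0 : ℝ), u ^ (p - 1) * exp (-((1 + t ^ 2) * u)) = (1 + t ^ 2) ^ (-p) * Gamma p := by
  rw [integral_rpow_mul_exp_neg_mul_Ioi hp (by positivity), one_div, inv_rpow (by positivity),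
    rpow_neg (by positivity)]

lemma integral_rpow_mul_exp_neg_one_add_sq_mul {u : ℝ} (hu : 0 < u) (p : ℝ) :
    ∫ t : ℝ, u ^ (p - 1) * exp (-((1 + t ^ 2) * u)) = √π * (exp (-u) * u ^ (p - 1 / 2 - 1)) := by
  have hsplit : ∀ t : ℝ, u ^ (p - 1) * exp (-((1 + t ^ 2) * u))
      = u ^ (p - 1) * exp (-u) * exp (-u * t ^ 2) := fun t => by
    rw [mul_assoc, ← exp_add]; ring_nf
  simp_rw [hsplit]
  rw [integral_const_mul, integral_gaussian, sqrt_div' _ hu.le, sqrt_eq_rpow u,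
    show p - 1 / 2 - 1 = (p - 1) - 1 / 2 by ring, rpow_sub hu (p - 1) (1 / 2)]
  ring

theorem integral_one_add_sq_rpow_neg {p : ℝ} (hp : 1 / 2 < p) :
    ∫ t : ℝ, (1 + t ^ 2) ^ (-p) = √π * Gamma (p - 1 / 2) / Gamma p := by
  have hp0 : 0 < p := by linarith
  have hΓ : 0 < Gamma p := Gamma_pos_of_pos hp0
  set F : ℝ → ℝ → ℝ := fun t u => u ^ (p - 1) * exp (-((1 + t ^ 2) * u))
  have hsection : ∀ t, ∫ u in Ioi (0 : ℝ), F t u = (1 + t ^ 2) ^ (-p) * Gamma p :=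
    integral_rpow_mul_exp_neg_one_add_sq_mul_Ioi hp0
  have hint : Integrable (Function.uncurry F) (volume.prod (volume.restrict (Ioi 0))) := by
    refine (integrable_prod_iff (by fun_prop)).2 ⟨ae_of_all _ fun t => ?_, ?_⟩
    · refine Integrable.of_integral_ne_zero ?_
      change ∫ u in Ioi (0 : ℝ), F t u ≠ 0
      rw [hsection]
      positivity
    · refine ((integrable_one_add_sq_rpow_neg hp).mul_const (Gamma p)).congr
        (ae_of_all _ fun t => ?_)
      change (1 + t ^ 2) ^ (-p) * Gamma p = ∫ u in Ioi (0 : ℝ), ‖F t u‖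
      rw [← hsection]
      refine setIntegral_congr_fun measurableSet_Ioi fun u (hu : 0 < u) => ?_
      exact (norm_of_nonneg (by positivity)).symm
  have hswap := integral_integral_swap hint
  rw [integral_congr_ae (ae_of_all _ hsection), integral_mul_const,
    setIntegral_congr_fun measurableSet_Ioi fun u (hu : 0 < u) =>
      integral_rpow_mul_exp_neg_one_add_sq_mul hu p,
    integral_const_mul, ← Gamma_eq_integral (by linarith)] at hswap
  rw [eq_div_iff hΓ.ne', hswap]

lemma integral_Ioi_comp_mul_add {E : Type*} [NormedAddCommGroup E] [NormedSpace ℝ E]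
    (g : ℝ → E) (a c : ℝ) {s : ℝ} (hs : 0 < s) :
    ∫ t in Ioi a, g (s * t + c) = s⁻¹ • ∫ r in Ioi (s * a + c), g r := by
  rw [integral_comp_mul_left_Ioi (fun x => g (x + c)) a hs]
  congr 1
  have hpre : Ioi (s * a) = (· + c) ⁻¹' Ioi (s * a + c) := by ext; simp
  rw [hpre, (measurePreserving_add_right volume c).setIntegral_preimage_emb
    (measurableEmbedding_addRight c)]

lemma integral_mul_sq_add_sq_rpow_neg {p : ℝ} (hp : 1 < p) (c : ℝ) {s : ℝ} (hs : 0 < s) :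
    ∫ r in Ioi (0 : ℝ), r * ((r - c) ^ 2 + s ^ 2) ^ (-p) =
      s ^ (1 - 2 * p) * ((s * ∫ t in Ioi (-(c / s)), t * (1 + t ^ 2) ^ (-p))
        + c * ∫ t in Ioi (-(c / s)), (1 + t ^ 2) ^ (-p)) := by
  have hsubst := integral_Ioi_comp_mul_add (fun r => r * ((r - c) ^ 2 + s ^ 2) ^ (-p))
    (-(c / s)) c hs
  rw [show s * -(c / s) + c = 0 by field_simp; ring, smul_eq_mul, eq_inv_mul_iff_mul_eq₀ hs.ne']
    at hsubst
  have hscale : ∀ t : ℝ, (s * t + c) * ((s * t + c - c) ^ 2 + s ^ 2) ^ (-p)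
      = s ^ (-2 * p) * (s * (t * (1 + t ^ 2) ^ (-p)) + c * (1 + t ^ 2) ^ (-p)) := fun t => by
    rw [show (s * t + c - c) ^ 2 + s ^ 2 = s ^ (2 : ℝ) * (1 + t ^ 2) by norm_cast; ring,
      mul_rpow (by positivity) (by positivity), ← rpow_mul hs.le]
    ring_nf
  simp_rw [hscale] at hsubst
  rw [← hsubst, integral_const_mul,
    integral_add (((integrable_mul_one_add_sq_rpow_neg hp).const_mul s).integrableOn)
      (((integrable_one_add_sq_rpow_neg (by linarith)).const_mul c).integrableOn),
    integral_const_mul, integral_const_mul, ← mul_assoc, ← rpow_one_add' hs.le (by linarith)]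
  ring_nf

lemma tendsto_neg_cos_div_sin_nhdsGT_zero :
    Tendsto (fun φ => -(cos φ / sin φ)) (𝓝[>] 0) atBot := by
  have hsin : Tendsto sin (𝓝[>] 0) (𝓝[>] 0) := by
    refine tendsto_nhdsWithin_of_tendsto_nhds_of_eventually_within _
      (continuous_sin.tendsto' 0 0 sin_zero |>.mono_left nhdsWithin_le_nhds) ?_
    filter_upwards [Ioo_mem_nhdsGT pi_pos] with φ hφ using sin_pos_of_pos_of_lt_pi hφ.1 hφ.2
  have hcos : Tendsto cos (𝓝[>] 0) (𝓝 1) :=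
    continuous_cos.tendsto' 0 1 cos_zero |>.mono_left nhdsWithin_le_nhds
  exact tendsto_neg_atTop_atBot.comp <|
    (hcos.pos_mul_atTop one_pos (tendsto_inv_nhdsGT_zero.comp hsin)).congr fun _ => rfl

lemma tendsto_self_div_sin_nhdsNE_zero : Tendsto (fun φ => φ / sin φ) (𝓝[≠] 0) (𝓝 1) := by
  have h := ((continuous_sinc.tendsto 0).mono_left (nhdsWithin_le_nhds (s := {0}ᶜ))).inv₀
    (by simp [sinc_zero])
  rw [sinc_zero, inv_one] at h
  refine h.congr' ?_
  filter_upwards [self_mem_nhdsWithin] with φ (hφ : φ ≠ 0)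
  rw [sinc_of_ne_zero hφ, inv_div]

theorem stmt3_general (α : ℝ) (hα : 0 < α) :
    Filter.Tendsto
      (fun φ : ℝ => φ ^ (1 + α) *
        ∫ r in Set.Ioi (0 : ℝ), r * (1 + r ^ 2 - 2 * r * Real.cos φ) ^ (-(1 + α / 2)))
      (nhdsWithin 0 (Set.Ioi 0))
      (nhds (Real.sqrt π * Real.Gamma ((1 + α) / 2) / Real.Gamma (1 + α / 2))) := by
  have hcover := aecover_Ioi (μ := volume) tendsto_neg_cos_div_sin_nhdsGT_zero
  have hF := hcover.integral_tendsto_of_countably_generated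
    (integrable_one_add_sq_rpow_neg (p := 1 + α / 2) (by linarith))
  have hG := hcover.integral_tendsto_of_countably_generated
    (integrable_mul_one_add_sq_rpow_neg (p := 1 + α / 2) (by linarith))
  have hsin : Tendsto sin (𝓝[>] 0) (𝓝 0) :=
    continuous_sin.tendsto' 0 0 sin_zero |>.mono_left nhdsWithin_le_nhds
  have hcos : Tendsto cos (𝓝[>] 0) (𝓝 1) :=
    continuous_cos.tendsto' 0 1 cos_zero |>.mono_left nhdsWithin_le_nhds
  have hratio := (tendsto_self_div_sin_nhdsNE_zero.mono_left
    (nhdsWithin_mono _ fun _ => ne_of_gt)).rpow_const (p := 1 + α) (Or.inr (by linarith))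
  have hlim := hratio.mul ((hsin.mul hG).add (hcos.mul hF))
  rw [integral_one_add_sq_rpow_neg (by linarith), show 1 + α / 2 - 1 / 2 = (1 + α) / 2 by ring]
    at hlim
  simp only [one_rpow, zero_mul, zero_add, one_mul] at hlim
  refine hlim.congr' ?_
  filter_upwards [Ioo_mem_nhdsGT pi_pos] with φ ⟨hφ0, hφπ⟩
  have hs := sin_pos_of_pos_of_lt_pi hφ0 hφπ
  have hquad : ∀ r, 1 + r ^ 2 - 2 * r * cos φ = (r - cos φ) ^ 2 + sin φ ^ 2 := fun r => by
    linear_combination -sin_sq_add_cos_sq φ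
  simp_rw [hquad]
  rw [integral_mul_sq_add_sq_rpow_neg (by linarith) _ hs, ← mul_assoc, div_rpow hφ0.le hs.le,
    show 1 - 2 * (1 + α / 2) = -(1 + α) by ring, rpow_neg hs.le, div_eq_mul_inv]

/-- For `0 < α < 2`,
`lim_{φ → 0⁺} φ^(1+α) ∫₀^∞ r (1 + r² - 2r cos φ)^(-(1+α/2)) dr
  = √π · Γ((1+α)/2) / Γ(1+α/2)`. -/
theorem stmt3 (α : ℝ) (hα : 0 < α) (hα2 : α < 2) :
    Filter.Tendsto
      (fun φ : ℝ => φ ^ (1 + α) *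
        ∫ r in Set.Ioi (0 : ℝ), r * (1 + r ^ 2 - 2 * r * Real.cos φ) ^ (-(1 + α / 2)))
      (nhdsWithin 0 (Set.Ioi 0))
      (nhds (Real.sqrt π * Real.Gamma ((1 + α) / 2) / Real.Gamma (1 + α / 2))) :=
  stmt3_general α hα
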